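/- Let G be a connected graph with adjacency matrix A, non-backtracking matrix B, and minimum degree d_min. Under the hypothesis ρ(A) ≥ 2√(x^T(D−I)y) (for the relevant Perron eigenvectors x of A and y from K), the spectral radius of B satisfies ρ(B) ≤ (ρ(A) + √(ρ(A)² − 4(d_min − 1)))/2. -/
import Mathlib


open Matrix

variable {V : Type*} [Fintype V] [DecidableEq V]

/-- The non-backtracking matrix of a simple graph, indexed by darts. -/
def nbMatrix (G : SimpleGraph V) [DecidableRel G.Adj] : Matrix G.Dart G.Dart ℂ :=
  Matrix.of fun d e => if d.toProd.2 = e.toProd.1 ∧ d.toProd.1 ≠ e.toProd.2 then 1 else 0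

/-- The matrix `K = [[A, D-I], [-I, 0]]` (over the reals). -/
def Kmatrix (G : SimpleGraph V) [DecidableRel G.Adj] : Matrix (V ⊕ V) (V ⊕ V) ℝ :=
  Matrix.fromBlocks (G.adjMatrix ℝ) (Matrix.diagonal (fun v => (G.degree v : ℝ)) - 1) (-1) 0

section Auxiliary

open Finset

lemma matrix_mem_spectrum_of_eigenvector {n : Type*} [Fintype n] [DecidableEq n]
    (M : Matrix n n ℂ) (μ : ℂ) (v : n → ℂ) (hv : v ≠ 0) (h : M *ᵥ v = μ • v) :
    μ ∈ spectrum ℂ M := by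
  rw [← AlgEquiv.spectrum_eq (Matrix.toLinAlgEquiv' (R := ℂ) (n := n)) M,
    ← Module.End.hasEigenvalue_iff_mem_spectrum]
  exact Module.End.hasEigenvalue_of_hasEigenvector
    ⟨Module.End.mem_eigenspace_iff.mpr (by simpa using h), hv⟩

lemma matrix_exists_eigenvector_of_mem_spectrum {n : Type*} [Fintype n] [DecidableEq n]
    {M : Matrix n n ℂ} {μ : ℂ} (h : μ ∈ spectrum ℂ M) :
    ∃ v, v ≠ 0 ∧ M *ᵥ v = μ • v := by
  rw [← AlgEquiv.spectrum_eq (Matrix.toLinAlgEquiv' (R := ℂ) (n := n)) M,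
    ← Module.End.hasEigenvalue_iff_mem_spectrum] at h
  obtain ⟨v, hv⟩ := h.exists_hasEigenvector
  exact ⟨v, hv.2, by simpa using Module.End.mem_eigenspace_iff.mp hv.1⟩

lemma perron_positive (G : SimpleGraph V)
    [DecidableRel G.Adj] (hconn : G.Connected) (ρA : ℝ) (x : V → ℝ) (hx : x ≠ 0)
    (hxpos : ∀ v, 0 ≤ x v) (hAx : G.adjMatrix ℝ *ᵥ x = ρA • x) : ∀ v, 0 < x v := by
  have hzero : ∀ v, x v = 0 → ∀ w, G.Adj v w → x w = 0 := by
    intro v hv w hw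
    have h1 : (G.adjMatrix ℝ *ᵥ x) v = 0 := by rw [hAx]; simp [hv]
    rw [SimpleGraph.adjMatrix_mulVec_apply] at h1
    exact (Finset.sum_eq_zero_iff_of_nonneg (fun u _ => hxpos u)).mp h1 w
      (by simpa using hw)
  have hwalk : ∀ {v w : V} (_ : G.Walk v w), x v = 0 → x w = 0 := by
    intro v w p
    induction p with
    | nil => exact id
    | cons h p ih => intro hv; exact ih (hzero _ hv _ h)
  obtain ⟨u, hu⟩ := Function.ne_iff.mp hx
  intro v
  rcases (hxpos v).lt_or_eq with h | h
  · exact h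
  · exact absurd ((hwalk (hconn v u).some h.symm)) hu

lemma dart_fiber_sum (G : SimpleGraph V) [DecidableRel G.Adj] (v : V) (h : V → ℂ) :
    ∑ d ∈ univ.filter (fun d : G.Dart => d.toProd.1 = v), h d.toProd.2
      = ∑ w ∈ G.neighborFinset v, h w := by
  refine Finset.sum_bij' (fun d _ => d.toProd.2)
    (fun w hw => SimpleGraph.Dart.mk (v, w) (by simpa using hw)) ?_ ?_ ?_ ?_ ?_
  · intro d hd
    simp only [mem_filter, mem_univ, true_and] at hd
    simpa [SimpleGraph.mem_neighborFinset] using hd ▸ d.adj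
  · intro w hw; simp
  · intro d hd
    simp only [mem_filter, mem_univ, true_and] at hd
    exact SimpleGraph.Dart.ext _ _
      (by simp only []; rw [show (v, d.toProd.2) = d.toProd from Prod.ext hd.symm rfl])
  · intro w hw; rfl
  · intro d hd; rfl

lemma dart_fiber_card (G : SimpleGraph V) [DecidableRel G.Adj] (v : V) :
    (univ.filter (fun d : G.Dart => d.toProd.1 = v)).card = G.degree v := by
  simpa using G.dart_fst_fiber_card_eq_degree v

lemma nb_mulVec_apply (G : SimpleGraph V) [DecidableRel G.Adj] (f : G.Dart → ℂ) (d : G.Dart) :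
    (nbMatrix G *ᵥ f) d
      = (∑ e ∈ univ.filter (fun e : G.Dart => e.toProd.1 = d.toProd.2), f e) - f d.symm := by
  have hins : univ.filter (fun e : G.Dart => e.toProd.1 = d.toProd.2)
      = insert d.symm (univ.filter
          (fun e : G.Dart => d.toProd.2 = e.toProd.1 ∧ d.toProd.1 ≠ e.toProd.2)) := by
    ext e
    simp only [mem_filter, mem_insert, mem_univ, true_and]
    constructor
    · intro he
      by_cases h2 : e.toProd.2 = d.toProd.1
      · left
        exact SimpleGraph.Dart.ext _ _ (Prod.ext (by simp [he]) (by simp [h2]))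
      · exact Or.inr ⟨he.symm, fun h => h2 h.symm⟩
    · rintro (rfl | ⟨h1, h2⟩)
      · simp
      · exact h1.symm
  have hnot : d.symm ∉ univ.filter
      (fun e : G.Dart => d.toProd.2 = e.toProd.1 ∧ d.toProd.1 ≠ e.toProd.2) := by
    simp
  show (∑ e, (if d.toProd.2 = e.toProd.1 ∧ d.toProd.1 ≠ e.toProd.2 then (1:ℂ) else 0) * f e) = _
  simp only [boole_mul]
  rw [← Finset.sum_filter, hins, Finset.sum_insert hnot]
  ring

lemma fromBlocksK_mulVec {α : Type*} [Field α] (A : Matrix V V α) (dg : V → α) (a b : V → α) :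
    (Matrix.fromBlocks A (Matrix.diagonal dg - 1) (-1) 0) *ᵥ Sum.elim a b
      = Sum.elim (A *ᵥ a + fun v => (dg v - 1) * b v) (-a) := by
  ext (v|v) <;>
    simp [Matrix.fromBlocks_mulVec, Matrix.sub_mulVec, Matrix.mulVec_diagonal,
      Matrix.neg_mulVec, Matrix.one_mulVec, Matrix.zero_mulVec, sub_mul]

lemma Kmap (G : SimpleGraph V) [DecidableRel G.Adj] :
    (Kmatrix G).map Complex.ofReal
      = Matrix.fromBlocks (G.adjMatrix ℂ)
          (Matrix.diagonal (fun v => (G.degree v : ℂ)) - 1) (-1) 0 := by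
  rw [Kmatrix]
  ext (i|i) (j|j) <;>
    simp [Matrix.map_apply, Matrix.sub_apply, Matrix.one_apply, Matrix.diagonal_apply,
      apply_ite Complex.ofReal]

end Auxiliary

/-- Let `G` be a connected graph, `ρA` the spectral radius of its adjacency matrix `A` with
Perron eigenvector `x`, and `(-ρK y, y)ᵀ` an eigenvector of `K` for its spectral radius `ρK`.
If `ρA ≥ 2√(xᵀ(D-I)y)`, then every eigenvalue `μ` of the non-backtracking matrix `B`
satisfies `|μ| ≤ (ρA + √(ρA² - 4(d_min - 1)))/2`. -/
theorem spectralRadius_nbMatrix_upper_bound (G : SimpleGraph V) [DecidableRel G.Adj]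
    (hconn : G.Connected)
    (ρA : ℝ) (hρA : ((ρA : ℂ)) ∈ spectrum ℂ (G.adjMatrix ℂ))
    (hρAmax : ∀ μ ∈ spectrum ℂ (G.adjMatrix ℂ), ‖μ‖ ≤ ρA)
    (x : V → ℝ) (hx : x ≠ 0) (hxpos : ∀ v, 0 ≤ x v)
    (hAx : G.adjMatrix ℝ *ᵥ x = ρA • x)
    (ρK : ℝ) (hρK : ((ρK : ℂ)) ∈ spectrum ℂ ((Kmatrix G).map Complex.ofReal))
    (hρKmax : ∀ μ ∈ spectrum ℂ ((Kmatrix G).map Complex.ofReal), ‖μ‖ ≤ ρK)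
    (y : V → ℝ) (hy : Sum.elim (fun v => -ρK * y v) y ≠ 0)
    (hKy : Kmatrix G *ᵥ Sum.elim (fun v => -ρK * y v) y
        = ρK • Sum.elim (fun v => -ρK * y v) y)
    (hcond : 2 * Real.sqrt (x ⬝ᵥ ((Matrix.diagonal (fun v => (G.degree v : ℝ)) - 1) *ᵥ y))
        ≤ ρA) :
    ∀ μ ∈ spectrum ℂ (nbMatrix G),
      ‖μ‖ ≤ (ρA + Real.sqrt (ρA ^ 2 - 4 * ((G.minDegree : ℝ) - 1))) / 2 := by
  classical
  have hV : Nonempty V := hconn.nonempty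
  have hxp : ∀ v, 0 < x v := perron_positive G hconn ρA x hx hxpos hAx
  -- `ρK ≥ 1`, using the eigenvector `(-1, 1)` of `K` for the eigenvalue `1`.
  have hρK1 : (1:ℝ) ≤ ρK := by
    have h1 : (1:ℂ) ∈ spectrum ℂ ((Kmatrix G).map Complex.ofReal) := by
      apply matrix_mem_spectrum_of_eigenvector _ _
        (Sum.elim (fun _ => (-1:ℂ)) (fun _ => (1:ℂ)))
      · intro hcontra
        have := congrFun hcontra (Sum.inr (Classical.arbitrary V))
        simp at this
      · rw [Kmap, fromBlocksK_mulVec]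
        ext (v|v)
        · simp only [Sum.elim_inl, Pi.add_apply, Pi.smul_apply, smul_eq_mul,
            SimpleGraph.adjMatrix_mulVec_apply, Finset.sum_const,
            SimpleGraph.card_neighborFinset_eq_degree, nsmul_eq_mul]
          ring
        · simp
    simpa using hρKmax _ h1
  -- the quadratic eigen-equation satisfied by `y`
  have hq : ∀ v, ρK^2 * y v - ρK * (G.adjMatrix ℝ *ᵥ y) v
      + ((G.degree v : ℝ) - 1) * y v = 0 := by
    intro v
    have h0 := congrFun hKy (Sum.inl v)
    have hKdef : Kmatrix G = Matrix.fromBlocks (G.adjMatrix ℝ)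
        (Matrix.diagonal (fun v => (G.degree v : ℝ)) - 1) (-1) 0 := rfl
    rw [hKdef, fromBlocksK_mulVec] at h0
    simp only [Sum.elim_inl, Pi.add_apply, Pi.smul_apply, smul_eq_mul] at h0
    have hA : (G.adjMatrix ℝ *ᵥ fun w => -ρK * y w) v = -ρK * (G.adjMatrix ℝ *ᵥ y) v := by
      simp [SimpleGraph.adjMatrix_mulVec_apply, Finset.mul_sum]
    rw [hA] at h0
    linear_combination h0
  set z : V → ℝ := fun v => |y v| with hz
  have hzpos : ∀ v, 0 ≤ z v := fun v => abs_nonneg _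
  have hquadineq : ∀ v, (ρK^2 + ((G.degree v : ℝ) - 1)) * z v
      ≤ ρK * (G.adjMatrix ℝ *ᵥ z) v := by
    intro v
    have hdeg0 : (0:ℝ) ≤ (G.degree v : ℝ) := Nat.cast_nonneg _
    have hρK2 : (1:ℝ) ≤ ρK^2 := by nlinarith
    have hco : 0 ≤ ρK^2 + ((G.degree v:ℝ) - 1) := by linarith
    have h2 : (ρK^2 + ((G.degree v:ℝ) - 1)) * y v = ρK * (G.adjMatrix ℝ *ᵥ y) v := by
      linear_combination hq v
    have h3 : |(G.adjMatrix ℝ *ᵥ y) v| ≤ (G.adjMatrix ℝ *ᵥ z) v := by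
      rw [SimpleGraph.adjMatrix_mulVec_apply, SimpleGraph.adjMatrix_mulVec_apply]
      exact Finset.abs_sum_le_sum_abs _ _
    calc (ρK^2 + ((G.degree v:ℝ) - 1)) * z v
        = |(ρK^2 + ((G.degree v:ℝ) - 1)) * y v| := by rw [abs_mul, abs_of_nonneg hco]
      _ = |ρK * (G.adjMatrix ℝ *ᵥ y) v| := by rw [h2]
      _ = ρK * |(G.adjMatrix ℝ *ᵥ y) v| := by
          rw [abs_mul, abs_of_nonneg (by linarith : (0:ℝ) ≤ ρK)]
      _ ≤ ρK * (G.adjMatrix ℝ *ᵥ z) v :=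
          mul_le_mul_of_nonneg_left h3 (by linarith)
  -- pair with `x`
  have hsum : ∑ v, x v * ((ρK^2 + ((G.degree v:ℝ) - 1)) * z v) ≤ ρK * (ρA * (x ⬝ᵥ z)) := by
    have h1 : ∑ v, x v * ((ρK^2 + ((G.degree v:ℝ) - 1)) * z v)
        ≤ ∑ v, x v * (ρK * (G.adjMatrix ℝ *ᵥ z) v) :=
      Finset.sum_le_sum fun v _ => mul_le_mul_of_nonneg_left (hquadineq v) (hxpos v)
    have h2 : ∑ v, x v * (ρK * (G.adjMatrix ℝ *ᵥ z) v)
        = ρK * (x ⬝ᵥ (G.adjMatrix ℝ *ᵥ z)) := by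
      rw [dotProduct, Finset.mul_sum]
      exact Finset.sum_congr rfl fun v _ => by ring
    have h3 : x ⬝ᵥ (G.adjMatrix ℝ *ᵥ z) = ρA * (x ⬝ᵥ z) := by
      rw [Matrix.dotProduct_mulVec,
        show (G.adjMatrix ℝ) = (G.adjMatrix ℝ)ᵀ from (SimpleGraph.transpose_adjMatrix G).symm,
        Matrix.vecMul_transpose, hAx, smul_dotProduct,
        smul_eq_mul]
    rw [h2, h3] at h1
    exact h1
  have hlow : (ρK^2 + ((G.minDegree:ℝ) - 1)) * (x ⬝ᵥ z)
      ≤ ∑ v, x v * ((ρK^2 + ((G.degree v:ℝ) - 1)) * z v) := by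
    rw [dotProduct, Finset.mul_sum]
    apply Finset.sum_le_sum
    intro v _
    have hd : (G.minDegree : ℝ) ≤ (G.degree v : ℝ) := by exact_mod_cast G.minDegree_le_degree v
    nlinarith [hxp v, hzpos v, mul_nonneg (hxp v).le (hzpos v)]
  have hspos : 0 < x ⬝ᵥ z := by
    have hy0 : y ≠ 0 := fun h => hy (by ext (v|v) <;> simp [h])
    obtain ⟨v0, hv0⟩ := Function.ne_iff.mp hy0
    apply Finset.sum_pos' (fun v _ => mul_nonneg (hxpos v) (hzpos v))
    exact ⟨v0, Finset.mem_univ _, mul_pos (hxp v0) (abs_pos.mpr hv0)⟩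
  have key : ρK^2 - ρA * ρK + ((G.minDegree:ℝ) - 1) ≤ 0 := by
    have hh := hlow.trans hsum
    nlinarith [hspos]
  have hbound : ρK ≤ (ρA + Real.sqrt (ρA^2 - 4*((G.minDegree:ℝ) - 1)))/2 := by
    have hΔ : (2*ρK - ρA)^2 ≤ ρA^2 - 4*((G.minDegree:ℝ) - 1) := by nlinarith [key]
    have h2 : 2*ρK - ρA ≤ Real.sqrt (ρA^2 - 4*((G.minDegree:ℝ) - 1)) :=
      calc 2*ρK - ρA ≤ |2*ρK - ρA| := le_abs_self _
        _ = Real.sqrt ((2*ρK - ρA)^2) := (Real.sqrt_sq_eq_abs _).symm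
        _ ≤ _ := Real.sqrt_le_sqrt hΔ
    linarith
  intro μ hμ
  by_cases hμ1 : μ^2 = 1
  · have hn : ‖μ‖ = 1 := by
      have h12 : (μ - 1) * (μ + 1) = 0 := by linear_combination hμ1
      rcases mul_eq_zero.mp h12 with h | h
      · rw [show μ = 1 by linear_combination h]; simp
      · rw [show μ = -1 by linear_combination h]; simp
    rw [hn]; linarith
  · obtain ⟨f, hf0, hf⟩ := matrix_exists_eigenvector_of_mem_spectrum hμ
    set g : V → ℂ := fun v => ∑ d ∈ Finset.univ.filter (fun d : G.Dart => d.toProd.1 = v), f d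
      with hg
    have E1 : ∀ d : G.Dart, μ * f d = g d.toProd.2 - f d.symm := by
      intro d
      have h0 := congrFun hf d
      rw [nb_mulVec_apply] at h0
      simp only [Pi.smul_apply, smul_eq_mul] at h0
      exact h0.symm
    have E2 : ∀ d : G.Dart, (1 - μ^2) * f d = g d.toProd.1 - μ * g d.toProd.2 := by
      intro d
      have h1 := E1 d
      have h2 := E1 d.symm
      rw [SimpleGraph.Dart.symm_symm] at h2
      simp only [SimpleGraph.Dart.symm_toProd, Prod.snd_swap, Prod.fst_swap] at h2
      linear_combination h2 - μ * h1
    have hAg : ∀ v, (1 - μ^2) * g v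
        = (G.degree v : ℂ) * g v - μ * (G.adjMatrix ℂ *ᵥ g) v := by
      intro v
      calc (1 - μ^2) * g v
          = ∑ d ∈ Finset.univ.filter (fun d : G.Dart => d.toProd.1 = v), (1 - μ^2) * f d := by
            rw [hg]; exact Finset.mul_sum _ _ _
        _ = ∑ d ∈ Finset.univ.filter (fun d : G.Dart => d.toProd.1 = v),
              (g v - μ * g d.toProd.2) := by
            refine Finset.sum_congr rfl fun d hd => ?_
            rw [E2 d, (Finset.mem_filter.mp hd).2]
        _ = (G.degree v : ℂ) * g v - μ * (G.adjMatrix ℂ *ᵥ g) v := by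
            rw [Finset.sum_sub_distrib, Finset.sum_const, ← Finset.mul_sum,
              dart_fiber_sum G v g, dart_fiber_card G v, nsmul_eq_mul,
              SimpleGraph.adjMatrix_mulVec_apply]
    have hgne : g ≠ 0 := by
      intro h0
      apply hf0
      ext d
      have h1 := E2 d
      rw [h0] at h1
      simp only [Pi.zero_apply, mul_zero, sub_zero, zero_sub, neg_zero] at h1
      have h2 : (1 - μ^2) ≠ 0 := fun h => hμ1 (by linear_combination -h)
      exact (mul_eq_zero.mp h1).resolve_left h2
    have hKe : ((Kmatrix G).map Complex.ofReal) *ᵥ (Sum.elim (fun v => -μ * g v) g)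
        = μ • Sum.elim (fun v => -μ * g v) g := by
      rw [Kmap, fromBlocksK_mulVec]
      ext (v|v)
      · simp only [Sum.elim_inl, Pi.add_apply, Pi.smul_apply, smul_eq_mul]
        have hA : (G.adjMatrix ℂ *ᵥ fun w => -μ * g w) v = -μ * (G.adjMatrix ℂ *ᵥ g) v := by
          simp [SimpleGraph.adjMatrix_mulVec_apply, Finset.mul_sum]
        rw [hA]
        linear_combination -(hAg v)
      · simp only [Sum.elim_inr, Pi.smul_apply, Pi.neg_apply, smul_eq_mul]
        ring
    have hμK : μ ∈ spectrum ℂ ((Kmatrix G).map Complex.ofReal) := by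
      apply matrix_mem_spectrum_of_eigenvector _ _ _ _ hKe
      intro h0
      exact hgne (funext fun v => congrFun h0 (Sum.inr v))
    exact (hρKmax μ hμK).trans hbound
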